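/- Let (f₀, f₁, f₂) ∈ ℝ³, ε > 0, and κ ∈ ℝ, and suppose min(|f₀ − f₁|, |f₁ − f₂|) ≥ ε and |κ| · min(|f₀ − f₁|, |f₁ − f₂|) ≥ ε. Then the modified Delta layer output of the scaled stencil (κf₀, κf₁, κf₂) equals the modified Delta layer output of (f₀, f₁, f₂); that is, the modified Delta layer is scale-invariant under these conditions. -/
import Mathlib


/-- The modified Delta layer of a three-point stencil `(f₀, f₁, f₂)`
with floor parameter `ε`. -/
noncomputable def mDelta (ε f0 f1 f2 : ℝ) : ℝ × ℝ × ℝ × ℝ :=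
  let d1 := max |f0 - f1| ε
  let d2 := max |f1 - f2| ε
  let m := max d1 d2
  (d1 / m, d2 / m, |f0 - f2| / m, |f0 - 2 * f1 + f2| / m)

theorem mDelta_scale_invariant (f0 f1 f2 ε κ : ℝ) (hε : 0 < ε)
    (h1 : ε ≤ min |f0 - f1| |f1 - f2|)
    (h2 : ε ≤ |κ| * min |f0 - f1| |f1 - f2|) :
    mDelta ε (κ * f0) (κ * f1) (κ * f2) = mDelta ε f0 f1 f2 := by
  have ha : ε ≤ |f0 - f1| := le_trans h1 (min_le_left _ _)
  have hb : ε ≤ |f1 - f2| := le_trans h1 (min_le_right _ _)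
  have hκ : 0 < |κ| := by
    by_contra h
    push_neg at h
    have : |κ| = 0 := le_antisymm h (abs_nonneg _)
    rw [this, zero_mul] at h2
    linarith
  have hκa : ε ≤ |κ| * |f0 - f1| :=
    le_trans h2 (mul_le_mul_of_nonneg_left (min_le_left _ _) (abs_nonneg _))
  have hκb : ε ≤ |κ| * |f1 - f2| :=
    le_trans h2 (mul_le_mul_of_nonneg_left (min_le_right _ _) (abs_nonneg _))
  have e1 : |κ * f0 - κ * f1| = |κ| * |f0 - f1| := by
    rw [← mul_sub, abs_mul]
  have e2 : |κ * f1 - κ * f2| = |κ| * |f1 - f2| := by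
    rw [← mul_sub, abs_mul]
  have e3 : |κ * f0 - κ * f2| = |κ| * |f0 - f2| := by
    rw [← mul_sub, abs_mul]
  have e4 : |κ * f0 - 2 * (κ * f1) + κ * f2| = |κ| * |f0 - 2 * f1 + f2| := by
    rw [← abs_mul]; ring_nf
  have hmm : |κ| * |f0 - f1| ⊔ |κ| * |f1 - f2| = |κ| * (|f0 - f1| ⊔ |f1 - f2|) :=
    (mul_max_of_nonneg _ _ (abs_nonneg κ)).symm
  simp only [mDelta, e1, e2, e3, e4, max_eq_left ha, max_eq_left hb,
    max_eq_left hκa, max_eq_left hκb, hmm]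
  refine Prod.ext ?_ (Prod.ext ?_ (Prod.ext ?_ ?_)) <;>
    · simp only []
      rw [mul_div_mul_left _ _ (ne_of_gt hκ)]
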